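/- arXiv:1811.11841 — 4 statements merged into one kernel-verified Lean document; each statement's English description precedes it below -/
import Mathlib

section
/- Let e₁, f₁, g₁ ∈ ℝ³ and (e₂,e₂'), (f₂,f₂'), (g₂,g₂') be pairs of vectors in ℝ³ such that the three determinants det(f₁,g₂,g₂'), det(e₁,f₂,f₂'), det(e₂,e₂',g₁) are nonzero, and let M be an invertible 3×3 real matrix. Then the triangle invariant is unchanged when every vector w among e₁,e₂,e₂',f₁,f₂,f₂',g₁,g₂,g₂' is replaced by M·w; that is, T(ME, MF, MG) = T(E,F,G). -/
/-- The determinant of the 3×3 real matrix with columns `a`, `b`, `c`. -/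
noncomputable def det3 (a b c : Fin 3 → ℝ) : ℝ :=
  Matrix.det (Matrix.transpose (Matrix.of ![a, b, c]))

/-- The triangle invariant of a triple of flags `E`, `F`, `G` in `ℝ³`, where the flag `E`
consists of the line spanned by `e₁` and the plane spanned by `e₂, e₂'` (similarly for
`F` and `G`). -/
noncomputable def triangleInv (e₁ e₂ e₂' f₁ f₂ f₂' g₁ g₂ g₂' : Fin 3 → ℝ) : ℝ :=
  (det3 e₂ e₂' f₁ / det3 f₁ g₂ g₂') * (det3 e₁ g₂ g₂' / det3 e₁ f₂ f₂') *
    (det3 f₂ f₂' g₁ / det3 e₂ e₂' g₁)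

/-! Replacing the columns `v` of a determinant by `M v` multiplies it by `det M`, so every
ratio of determinants in the triangle invariant is unchanged once `det M ≠ 0`. -/

open Matrix

theorem Matrix.det_of_mulVec {n R : Type*} [Fintype n] [DecidableEq n] [CommRing R]
    (M : Matrix n n R) (v : n → n → R) :
    (of fun i => M *ᵥ v i).det = M.det * (of v).det := by
  have hrows : (of fun i => M *ᵥ v i) = of v * Mᵀ := by
    ext i j
    simp [mul_apply, mulVec, dotProduct, mul_comm]
  rw [hrows, det_mul, det_transpose, mul_comm]

lemma det3_mulVec (M : Matrix (Fin 3) (Fin 3) ℝ) (a b c : Fin 3 → ℝ) :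
    det3 (M *ᵥ a) (M *ᵥ b) (M *ᵥ c) = M.det * det3 a b c := by
  simp only [det3, det_transpose]
  rw [← det_of_mulVec]
  congr
  ext i : 1
  fin_cases i <;> rfl

theorem triangleInv_matrix_invariant_general (e₁ e₂ e₂' f₁ f₂ f₂' g₁ g₂ g₂' : Fin 3 → ℝ)
    (M : Matrix (Fin 3) (Fin 3) ℝ) (hM : IsUnit M) :
    triangleInv (M.mulVec e₁) (M.mulVec e₂) (M.mulVec e₂') (M.mulVec f₁)
      (M.mulVec f₂) (M.mulVec f₂') (M.mulVec g₁) (M.mulVec g₂) (M.mulVec g₂')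
    = triangleInv e₁ e₂ e₂' f₁ f₂ f₂' g₁ g₂ g₂' := by
  have hdet : M.det ≠ 0 := ((isUnit_iff_isUnit_det M).mp hM).ne_zero
  simp only [triangleInv, det3_mulVec, mul_div_mul_left _ _ hdet]

/-- The triangle invariant is invariant under the action of an invertible matrix `M`
on all the vectors defining the three flags: `T(ME,MF,MG) = T(E,F,G)`. -/
theorem triangleInv_matrix_invariant (e₁ e₂ e₂' f₁ f₂ f₂' g₁ g₂ g₂' : Fin 3 → ℝ)
    (h₂ : det3 f₁ g₂ g₂' ≠ 0) (h₄ : det3 e₁ f₂ f₂' ≠ 0) (h₆ : det3 e₂ e₂' g₁ ≠ 0)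
    (M : Matrix (Fin 3) (Fin 3) ℝ) (hM : IsUnit M) :
    triangleInv (M.mulVec e₁) (M.mulVec e₂) (M.mulVec e₂') (M.mulVec f₁)
      (M.mulVec f₂) (M.mulVec f₂') (M.mulVec g₁) (M.mulVec g₂) (M.mulVec g₂')
    = triangleInv e₁ e₂ e₂' f₁ f₂ f₂' g₁ g₂ g₂' :=
  triangleInv_matrix_invariant_general e₁ e₂ e₂' f₁ f₂ f₂' g₁ g₂ g₂' M hM
end

section
/- Let v, x, y ∈ ℝ with x ≠ 0 and y ≠ 0, and let z = (z₁,z₂,z₃) ∈ ℝ³ with z₂ ≠ 0 and z₃ ≠ 0. Set e₁ = (0,0,1), f₁ = (1,0,0), f₂ = (1,0,0), f₂' = (0,1,0). Then D₁(E,F,G,L') = e^{−3v} · D₁(E,F,G,L), where G has line spanned by g₁ = z, L has line spanned by l₁ = (1,y,x), and L' has line spanned by l₁' = (1, e^{3v}·y, x). In particular, under the bulging deformation with parameter v, which moves the vertex (1,y,x) to (1,e^{3v}y,x), the first shear parameter σ₁ = log D₁ changes to σ₁ − 3v. -/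
/-- The first double ratio `D₁(E,F,G,L)` of a quadruple of flags whose lines are spanned
by `e₁, f₁, g₁, l₁` and where the plane of `F` is spanned by `f₂, f₂'`. -/
noncomputable def doubleRatio₁ (e₁ f₁ f₂ f₂' g₁ l₁ : Fin 3 → ℝ) : ℝ :=
  -(det3 e₁ f₁ g₁ / det3 e₁ f₁ l₁) * (det3 f₂ f₂' l₁ / det3 f₂ f₂' g₁)

/-! In the frame `e₁ = (0,0,1)`, `f₁ = f₂ = (1,0,0)`, `f₂' = (0,1,0)` the double ratio is
`-(g₁ 1 / l₁ 1) * (l₁ 2 / g₁ 2)`, so rescaling the middle coordinate of `l₁` by `c` rescales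
`D₁` by `c⁻¹`; with `c = e^{3v}` this is the bulging formula. -/

open Matrix

theorem det3_eq_dotProduct_cross (a b c : Fin 3 → ℝ) : det3 a b c = a ⬝ᵥ crossProduct b c := by
  rw [det3, det_transpose, triple_product_eq_det]
  rfl

theorem det3_e₃_e₁ (g : Fin 3 → ℝ) : det3 ![0, 0, 1] ![1, 0, 0] g = g 1 := by
  simp [det3_eq_dotProduct_cross, cross_apply, dotProduct, Fin.sum_univ_three]

theorem det3_e₁_e₂ (l : Fin 3 → ℝ) : det3 ![1, 0, 0] ![0, 1, 0] l = l 2 := by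
  simp [det3_eq_dotProduct_cross, cross_apply, dotProduct, Fin.sum_univ_three]

theorem doubleRatio₁_standard (g l : Fin 3 → ℝ) :
    doubleRatio₁ ![0, 0, 1] ![1, 0, 0] ![1, 0, 0] ![0, 1, 0] g l = -(g 1 / l 1) * (l 2 / g 2) := by
  rw [doubleRatio₁, det3_e₃_e₁, det3_e₃_e₁, det3_e₁_e₂, det3_e₁_e₂]

theorem doubleRatio₁_standard_of_scale_one {g l l' : Fin 3 → ℝ} {c : ℝ}
    (h₁ : l' 1 = c * l 1) (h₂ : l' 2 = l 2) :
    doubleRatio₁ ![0, 0, 1] ![1, 0, 0] ![1, 0, 0] ![0, 1, 0] g l'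
      = c⁻¹ * doubleRatio₁ ![0, 0, 1] ![1, 0, 0] ![1, 0, 0] ![0, 1, 0] g l := by
  rw [doubleRatio₁_standard, doubleRatio₁_standard, h₁, h₂, div_mul_eq_div_div_swap]
  ring

open Real in
theorem doubleRatio₁_bulging_general (v x y : ℝ)
    (z : Fin 3 → ℝ) :
    doubleRatio₁ ![0, 0, 1] ![1, 0, 0] ![1, 0, 0] ![0, 1, 0] z
        ![1, exp (3 * v) * y, x]
    = exp (-(3 * v)) * doubleRatio₁ ![0, 0, 1] ![1, 0, 0] ![1, 0, 0] ![0, 1, 0] z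
        ![1, y, x] := by
  rw [exp_neg]
  exact doubleRatio₁_standard_of_scale_one rfl rfl

open Real in
/-- Under the bulging deformation with parameter `v`, which moves the vertex `(1,y,x)` to
`(1, e^{3v}·y, x)`, the first double ratio gets multiplied by `e^{−3v}`; hence the first
shear parameter `σ₁ = log D₁` changes to `σ₁ − 3v`. -/
theorem doubleRatio₁_bulging (v x y : ℝ) (hx : x ≠ 0) (hy : y ≠ 0)
    (z : Fin 3 → ℝ) (hz₂ : z 1 ≠ 0) (hz₃ : z 2 ≠ 0) :
    doubleRatio₁ ![0, 0, 1] ![1, 0, 0] ![1, 0, 0] ![0, 1, 0] z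
        ![1, exp (3 * v) * y, x]
    = exp (-(3 * v)) * doubleRatio₁ ![0, 0, 1] ![1, 0, 0] ![1, 0, 0] ![0, 1, 0] z
        ![1, y, x] :=
  doubleRatio₁_bulging_general v x y z
end

section
/- Let v, x, y ∈ ℝ with x ≠ 0 and y ≠ 0, and let z = (z₁,z₂,z₃) ∈ ℝ³ with z₁ ≠ 0 and z₂ ≠ 0. Set e₁ = (0,0,1), e₂ = (0,0,1), e₂' = (0,1,0), f₁ = (1,0,0). Then D₂(E,F,G,L') = e^{3v} · D₂(E,F,G,L), where G has line spanned by g₁ = z, L has line spanned by l₁ = (1,y,x), and L' has line spanned by l₁' = (1, e^{3v}·y, x). In particular, under the bulging deformation with parameter v, which moves the vertex (1,y,x) to (1,e^{3v}y,x), the second shear parameter σ₂ = log D₂ changes to σ₂ + 3v, so the difference σ₂ − σ₁ increases by 6v and measures the bulging parameter. -/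
/-- The second double ratio `D₂(E,F,G,L)` of a quadruple of flags whose lines are spanned
by `e₁, f₁, g₁, l₁` and where the plane of `E` is spanned by `e₂, e₂'`. -/
noncomputable def doubleRatio₂ (e₁ e₂ e₂' f₁ g₁ l₁ : Fin 3 → ℝ) : ℝ :=
  -(det3 e₂ e₂' g₁ / det3 e₂ e₂' l₁) * (det3 e₁ f₁ l₁ / det3 e₁ f₁ g₁)

/-!
Both determinants in `D₂` are linear forms in the last vector, `det(a, b, w) = (a × b) · w`,
so `D₂(E,F,G,L)` depends on `l₁` only through `(e₂ × e₂') · l₁` and `(e₁ × f₁) · l₁`.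
For the standard flags these are `-l₁₀` and `l₁₁`; the bulging fixes the first and multiplies
the second by `e^{3v}`.
-/

open Matrix

theorem det3_eq_cross_dotProduct (a b c : Fin 3 → ℝ) : det3 a b c = (a ⨯₃ b) ⬝ᵥ c := by
  rw [det3, det_transpose, dotProduct_comm, triple_product_permutation, triple_product_eq_det]
  rfl

theorem doubleRatio₂_eq_cross_dotProduct (e₁ e₂ e₂' f₁ g₁ l₁ : Fin 3 → ℝ) :
    doubleRatio₂ e₁ e₂ e₂' f₁ g₁ l₁ =
      -((e₂ ⨯₃ e₂') ⬝ᵥ g₁ / ((e₂ ⨯₃ e₂') ⬝ᵥ l₁)) * ((e₁ ⨯₃ f₁) ⬝ᵥ l₁ / ((e₁ ⨯₃ f₁) ⬝ᵥ g₁)) := by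
  simp only [doubleRatio₂, det3_eq_cross_dotProduct]

theorem doubleRatio₂_eq_mul_of_dotProduct_cross {e₁ e₂ e₂' f₁ g₁ l₁ l₁' : Fin 3 → ℝ} (t : ℝ)
    (hE : (e₂ ⨯₃ e₂') ⬝ᵥ l₁' = (e₂ ⨯₃ e₂') ⬝ᵥ l₁)
    (hF : (e₁ ⨯₃ f₁) ⬝ᵥ l₁' = t * (e₁ ⨯₃ f₁) ⬝ᵥ l₁) :
    doubleRatio₂ e₁ e₂ e₂' f₁ g₁ l₁' = t * doubleRatio₂ e₁ e₂ e₂' f₁ g₁ l₁ := by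
  simp only [doubleRatio₂_eq_cross_dotProduct, hE, hF]
  ring

open Real in
theorem doubleRatio₂_bulging_general (v x y : ℝ)
    (z : Fin 3 → ℝ) :
    doubleRatio₂ ![0, 0, 1] ![0, 0, 1] ![0, 1, 0] ![1, 0, 0] z
        ![1, exp (3 * v) * y, x]
    = exp (3 * v) * doubleRatio₂ ![0, 0, 1] ![0, 0, 1] ![0, 1, 0] ![1, 0, 0] z
        ![1, y, x] := by
  apply doubleRatio₂_eq_mul_of_dotProduct_cross <;>
    simp [cross_apply]

open Real in
/-- Under the bulging deformation with parameter `v`, which moves the vertex `(1,y,x)` to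
`(1, e^{3v}·y, x)`, the second double ratio gets multiplied by `e^{3v}`; hence the second
shear parameter `σ₂ = log D₂` changes to `σ₂ + 3v`, and the difference `σ₂ − σ₁`
increases by `6v`. -/
theorem doubleRatio₂_bulging (v x y : ℝ) (hx : x ≠ 0) (hy : y ≠ 0)
    (z : Fin 3 → ℝ) (hz₁ : z 0 ≠ 0) (hz₂ : z 1 ≠ 0) :
    doubleRatio₂ ![0, 0, 1] ![0, 0, 1] ![0, 1, 0] ![1, 0, 0] z
        ![1, exp (3 * v) * y, x]
    = exp (3 * v) * doubleRatio₂ ![0, 0, 1] ![0, 0, 1] ![0, 1, 0] ![1, 0, 0] z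
        ![1, y, x] :=
  doubleRatio₂_bulging_general v x y z
end

section
/- Let e₁, f₁, g₁ ∈ ℝ³ and (e₂,e₂'), (f₂,f₂'), (g₂,g₂') be pairs of vectors in ℝ³ such that det(f₁,g₂,g₂'), det(e₁,f₂,f₂'), det(e₂,e₂',g₁) are nonzero. Let r, u, w be nonzero real numbers and let (a,b,c,d), (a',b',c',d'), (a'',b'',c'',d'') be real quadruples with ad−bc ≠ 0, a'd'−b'c' ≠ 0, a''d''−b''c'' ≠ 0. Then the triangle invariant computed from r·e₁, (a·e₂+b·e₂', c·e₂+d·e₂'), u·f₁, (a'·f₂+b'·f₂', c'·f₂+d'·f₂'), w·g₁, (a''·g₂+b''·g₂', c''·g₂+d''·g₂') equals the triangle invariant computed from the original vectors. That is, T(E,F,G) depends only on the lines span(e₁), span(f₁), span(g₁) and the planes span(e₂,e₂'), span(f₂,f₂'), span(g₂,g₂'), not on the chosen spanning vectors. -/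
lemma det3_eq_expansion (a b c : Fin 3 → ℝ) : det3 a b c =
    a 0 * b 1 * c 2 - a 0 * b 2 * c 1 - a 1 * b 0 * c 2 + a 1 * b 2 * c 0
      + a 2 * b 0 * c 1 - a 2 * b 1 * c 0 := by
  simp [det3, Matrix.det_fin_three]

lemma det3_cycle (a b c : Fin 3 → ℝ) : det3 b c a = det3 a b c := by
  simp only [det3_eq_expansion]
  ring

lemma det3_smul_left (r : ℝ) (x y z : Fin 3 → ℝ) : det3 (r • x) y z = r * det3 x y z := by
  simp only [det3_eq_expansion, Pi.smul_apply, smul_eq_mul]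
  ring

lemma det3_smul_right (r : ℝ) (x y z : Fin 3 → ℝ) : det3 x y (r • z) = r * det3 x y z := by
  rw [det3_cycle, det3_smul_left, ← det3_cycle]

lemma det3_basisChange_left (a b c d : ℝ) (x y z : Fin 3 → ℝ) :
    det3 (a • x + b • y) (c • x + d • y) z = (a * d - b * c) * det3 x y z := by
  simp only [det3_eq_expansion, Pi.add_apply, Pi.smul_apply, smul_eq_mul]
  ring

lemma det3_basisChange_right (a b c d : ℝ) (x y z : Fin 3 → ℝ) :
    det3 z (a • x + b • y) (c • x + d • y) = (a * d - b * c) * det3 z x y := by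
  rw [← det3_cycle, det3_basisChange_left, det3_cycle]

lemma triangleInv_eq_div (e₁ e₂ e₂' f₁ f₂ f₂' g₁ g₂ g₂' : Fin 3 → ℝ) :
    triangleInv e₁ e₂ e₂' f₁ f₂ f₂' g₁ g₂ g₂' =
      det3 e₂ e₂' f₁ * det3 e₁ g₂ g₂' * det3 f₂ f₂' g₁ /
        (det3 f₁ g₂ g₂' * det3 e₁ f₂ f₂' * det3 e₂ e₂' g₁) := by
  rw [triangleInv, div_mul_div_comm, div_mul_div_comm]

theorem triangleInv_well_defined_general (e₁ e₂ e₂' f₁ f₂ f₂' g₁ g₂ g₂' : Fin 3 → ℝ)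
    (r u w : ℝ) (hr : r ≠ 0) (hu : u ≠ 0) (hw : w ≠ 0)
    (a b c d a' b' c' d' a'' b'' c'' d'' : ℝ)
    (habcd : a * d - b * c ≠ 0) (habcd' : a' * d' - b' * c' ≠ 0)
    (habcd'' : a'' * d'' - b'' * c'' ≠ 0) :
    triangleInv (r • e₁) (a • e₂ + b • e₂') (c • e₂ + d • e₂') (u • f₁)
      (a' • f₂ + b' • f₂') (c' • f₂ + d' • f₂') (w • g₁)
      (a'' • g₂ + b'' • g₂') (c'' • g₂ + d'' • g₂')
    = triangleInv e₁ e₂ e₂' f₁ f₂ f₂' g₁ g₂ g₂' := by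
  set k := r * u * w * (a * d - b * c) * (a' * d' - b' * c') * (a'' * d'' - b'' * c'')
  have hk : k ≠ 0 := by simp only [k, mul_ne_zero_iff]; tauto
  rw [triangleInv_eq_div, triangleInv_eq_div]
  simp only [det3_basisChange_left, det3_basisChange_right, det3_smul_left,
    det3_smul_right]
  calc _ = k * (det3 e₂ e₂' f₁ * det3 e₁ g₂ g₂' * det3 f₂ f₂' g₁) /
          (k * (det3 f₁ g₂ g₂' * det3 e₁ f₂ f₂' * det3 e₂ e₂' g₁)) := by ring
    _ = _ := mul_div_mul_left _ _ hk

/-- The triangle invariant depends only on the lines `span(e₁), span(f₁), span(g₁)` and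
the planes `span(e₂,e₂'), span(f₂,f₂'), span(g₂,g₂')`, not on the chosen spanning
vectors: rescaling each line vector by a nonzero scalar and replacing each spanning pair
of a plane by another basis of the same plane leaves the invariant unchanged. -/
theorem triangleInv_well_defined (e₁ e₂ e₂' f₁ f₂ f₂' g₁ g₂ g₂' : Fin 3 → ℝ)
    (h₂ : det3 f₁ g₂ g₂' ≠ 0) (h₄ : det3 e₁ f₂ f₂' ≠ 0) (h₆ : det3 e₂ e₂' g₁ ≠ 0)
    (r u w : ℝ) (hr : r ≠ 0) (hu : u ≠ 0) (hw : w ≠ 0)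
    (a b c d a' b' c' d' a'' b'' c'' d'' : ℝ)
    (habcd : a * d - b * c ≠ 0) (habcd' : a' * d' - b' * c' ≠ 0)
    (habcd'' : a'' * d'' - b'' * c'' ≠ 0) :
    triangleInv (r • e₁) (a • e₂ + b • e₂') (c • e₂ + d • e₂') (u • f₁)
      (a' • f₂ + b' • f₂') (c' • f₂ + d' • f₂') (w • g₁)
      (a'' • g₂ + b'' • g₂') (c'' • g₂ + d'' • g₂')
    = triangleInv e₁ e₂ e₂' f₁ f₂ f₂' g₁ g₂ g₂' :=
  triangleInv_well_defined_general e₁ e₂ e₂' f₁ f₂ f₂' g₁ g₂ g₂' r u w hr hu hw a b c d a' b' c' d'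
    a'' b'' c'' d'' habcd habcd' habcd''
end
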